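/- Let a > -1 be real and n a nonnegative integer. Suppose y : ℝ → ℂ is twice differentiable and satisfies the Hermite equation y''(u) - 2u·y'(u) + 2n·y(u) = 0 for all u. Then the function Ψ(u) = |u|^{a/(2(a+1))}·exp(-u²/2)·y(u) satisfies, at every u ≠ 0, the equation Ψ''(u) - (a/((a+1)u))·Ψ'(u) + ( a(3a+2)/4 + (a+1)·c·u² - (a+1)²u⁴ )/((a+1)²u²)·Ψ(u) = 0, where c = (a+1)(2n+1). -/

import Mathlib

/-!
Write `Ψ = r · y` with the real factor `r(t) = |t|^A e^{-t²/2}`, `A = a/(2(a+1))`, whose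
logarithmic derivative is `h(t) = A/t - t`. Then `Ψ' = r (y' + h y)` and
`Ψ'' = r (y'' + 2h y' + (h' + h²) y)`, so the deformed oscillator operator applied to `Ψ` is `r`
times `y'' + (2h - b) y' + (h' + h² - b h + V) y`, with `b = a/((a+1)t)` and `V` the potential
term. The choice of `A` makes `2h - b = -2t` and `c = (a+1)(2n+1)` makes
`h' + h² - b h + V = 2n`, which leaves `r` times the Hermite operator applied to `y`.
-/

/-- The factorized ansatz `Ψ(u) = |u|^(a/(2(a+1)))·exp(-u²/2)·y(u)`. -/
noncomputable def PsiAnsatz (a : ℝ) (y : ℝ → ℂ) (u : ℝ) : ℂ :=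
  ((|u| ^ (a / (2 * (a + 1))) : ℝ) : ℂ) * Complex.exp (-(u : ℂ) ^ 2 / 2) * y u

open Filter Topology

section LogDeriv

variable {r h : ℝ → ℝ} {y : ℝ → ℂ}

theorem hasDerivAt_ofReal_mul_of_logDeriv {x : ℝ} (hr : HasDerivAt r (h x * r x) x)
    (hy : DifferentiableAt ℝ y x) :
    HasDerivAt (fun t => (r t : ℂ) * y t) (r x * (deriv y x + h x * y x)) x :=
  (hr.ofReal_comp.mul hy.hasDerivAt).congr_deriv (by push_cast; ring)

theorem deriv_deriv_ofReal_mul_of_logDeriv {u h' : ℝ}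
    (hr : ∀ᶠ x in 𝓝 u, HasDerivAt r (h x * r x) x) (hh : HasDerivAt h h' u)
    (hy : ∀ᶠ x in 𝓝 u, DifferentiableAt ℝ y x) (hy' : DifferentiableAt ℝ (deriv y) u) :
    deriv (deriv fun t => (r t : ℂ) * y t) u
      = r u * (deriv (deriv y) u + 2 * h u * deriv y u + (h' + h u ^ 2) * y u) := by
  have hderiv : deriv (fun t => (r t : ℂ) * y t) =ᶠ[𝓝 u]
      fun x => (r x : ℂ) * (deriv y x + h x * y x) := by
    filter_upwards [hr, hy] with x hrx hyx
    exact (hasDerivAt_ofReal_mul_of_logDeriv hrx hyx).deriv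
  have hsecond : HasDerivAt (fun x => (r x : ℂ) * (deriv y x + h x * y x))
      (((h u * r u : ℝ) : ℂ) * (deriv y u + h u * y u)
        + r u * (deriv (deriv y) u + (h' * y u + h u * deriv y u))) u :=
    hr.self_of_nhds.ofReal_comp.mul
      (hy'.hasDerivAt.add (hh.ofReal_comp.mul hy.self_of_nhds.hasDerivAt))
  rw [hderiv.deriv_eq, hsecond.deriv]
  push_cast
  ring

end LogDeriv

theorem hasDerivAt_abs_rpow_of_ne_zero (A : ℝ) {x : ℝ} (hx : x ≠ 0) :
    HasDerivAt (fun t : ℝ => |t| ^ A) (A / x * |x| ^ A) x := by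
  convert (hasDerivAt_abs hx).rpow_const (p := A) (Or.inl (abs_ne_zero.2 hx)) using 1
  rw [Real.rpow_sub_one (abs_ne_zero.2 hx)]
  rcases hx.lt_or_gt with hneg | hpos
  · simp [hneg, abs_of_neg]
    field_simp
  · simp [hpos, abs_of_pos]
    field_simp

noncomputable def radialFactor (A t : ℝ) : ℝ :=
  |t| ^ A * Real.exp (-(t ^ 2) / 2)

theorem hasDerivAt_radialFactor (A : ℝ) {x : ℝ} (hx : x ≠ 0) :
    HasDerivAt (radialFactor A) ((A / x - x) * radialFactor A x) x := by
  have hgauss : HasDerivAt (fun t : ℝ => Real.exp (-(t ^ 2) / 2))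
      (Real.exp (-(x ^ 2) / 2) * -x) x := by
    have hexponent : HasDerivAt (fun t : ℝ => -(t ^ 2) / 2) (-x) x :=
      ((hasDerivAt_pow 2 x).neg.div_const 2).congr_deriv (by push_cast; ring)
    exact hexponent.exp
  exact ((hasDerivAt_abs_rpow_of_ne_zero A hx).mul hgauss).congr_deriv (by
    rw [radialFactor]
    ring)

theorem PsiAnsatz_eq_radialFactor_mul (a : ℝ) (y : ℝ → ℂ) :
    PsiAnsatz a y = fun t => (radialFactor (a / (2 * (a + 1))) t : ℂ) * y t := by
  funext t
  simp only [PsiAnsatz, radialFactor, Complex.ofReal_mul, Complex.ofReal_exp]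
  push_cast
  ring

theorem two_mul_logDeriv_sub_drift {a u : ℝ} (ha : a + 1 ≠ 0) (hu : u ≠ 0) :
    2 * (a / (2 * (a + 1)) / u - u) - a / ((a + 1) * u) = -(2 * u) := by
  field_simp
  ring

theorem logDeriv_riccati_add_potential {a u : ℝ} (ha : a + 1 ≠ 0) (hu : u ≠ 0) (n : ℝ) :
    (-(a / (2 * (a + 1)) / u ^ 2) - 1) + (a / (2 * (a + 1)) / u - u) ^ 2
      - a / ((a + 1) * u) * (a / (2 * (a + 1)) / u - u)
      + (a * (3 * a + 2) / 4 + (a + 1) * ((a + 1) * (2 * n + 1)) * u ^ 2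
          - (a + 1) ^ 2 * u ^ 4) / ((a + 1) ^ 2 * u ^ 2)
      = 2 * n := by
  field_simp
  ring

/-- if `y` solves the Hermite equation `y'' - 2u·y' + 2n·y = 0`, then
`Ψ(u) = |u|^(a/(2(a+1)))·exp(-u²/2)·y(u)` solves the dimensionless deformed oscillator
equation with `c = (a+1)(2n+1)` at every `u ≠ 0`. -/
theorem stmt7 (a : ℝ) (ha : -1 < a) (n : ℕ) (y : ℝ → ℂ)
    (hy : Differentiable ℝ y) (hy' : Differentiable ℝ (deriv y))
    (heq : ∀ u : ℝ,
      deriv (deriv y) u - 2 * (u : ℂ) * deriv y u + 2 * (n : ℂ) * y u = 0) :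
    ∀ u : ℝ, u ≠ 0 →
      deriv (deriv (PsiAnsatz a y)) u
        - ((a / ((a + 1) * u) : ℝ) : ℂ) * deriv (PsiAnsatz a y) u
        + (((a * (3 * a + 2) / 4
              + (a + 1) * ((a + 1) * (2 * (n : ℝ) + 1)) * u ^ 2
              - (a + 1) ^ 2 * u ^ 4)
            / ((a + 1) ^ 2 * u ^ 2) : ℝ) : ℂ) * PsiAnsatz a y u = 0 := by
  intro u hu
  have ha1 : a + 1 ≠ 0 := by linarith
  set A := a / (2 * (a + 1))
  have hr : ∀ᶠ x in 𝓝 u, HasDerivAt (radialFactor A) ((A / x - x) * radialFactor A x) x :=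
    (eventually_ne_nhds hu).mono fun x hx => hasDerivAt_radialFactor A hx
  have hlog : HasDerivAt (fun x => A / x - x) (-(A / u ^ 2) - 1) u :=
    (((hasDerivAt_const u A).div (hasDerivAt_id u) hu).sub (hasDerivAt_id u)).congr_deriv
      (by simp [neg_div])
  rw [PsiAnsatz_eq_radialFactor_mul,
    deriv_deriv_ofReal_mul_of_logDeriv hr hlog (.of_forall hy) (hy' u),
    (hasDerivAt_ofReal_mul_of_logDeriv hr.self_of_nhds (hy u)).deriv]
  have hdrift := congrArg Complex.ofReal (two_mul_logDeriv_sub_drift ha1 hu)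
  have hpotential := congrArg Complex.ofReal (logDeriv_riccati_add_potential ha1 hu n)
  push_cast [A] at hdrift hpotential ⊢
  linear_combination (radialFactor A u : ℂ) *
    (heq u + y u * hpotential + deriv y u * hdrift)
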